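/- arXiv:0906.1470 — 2 statements merged into one kernel-verified Lean document; each statement's English description precedes it below -/
import Mathlib

section
/- Let p > 1, q > 1, and ν : (0,T] → (0,∞) nondecreasing with ∫₀^T (s/ν(s))^{q'/p} ds < ∞, where q' = q/(q−1). For s ∈ (0,T) define r(s) = inf{r ∈ [s,T] : 2 ν(r)^{-1/p} r^{1/q'} ≥ sup_{s ≤ ρ ≤ T} ν(ρ)^{-1/p} ρ^{1/q'}} (when the sup over (0,T] is infinite). Then lim_{s→0⁺} s^{1/p} · sup_{s ≤ r ≤ T} ν(r)^{-1/p} r^{1/q'} = 0. -/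
open MeasureTheory Filter ENNReal Set

/-- If `ν : (0,T] → (0,∞)` is nondecreasing with `∫₀^T (s/ν(s))^{q'/p} ds < ∞`,
then `s^{1/p} · sup_{s ≤ r ≤ T} ν(r)^{-1/p} r^{1/q'} → 0` as `s → 0⁺`. -/
theorem weighted_sup_vanishes (T p q q' : ℝ) (hT : 0 < T) (hp : 1 < p)
    (hq : 1 < q) (hq' : q' = q / (q - 1)) (ν : ℝ → ℝ)
    (hν : MonotoneOn ν (Set.Ioc 0 T))
    (hνpos : ∀ s ∈ Set.Ioc (0 : ℝ) T, 0 < ν s)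
    (hint : IntegrableOn (fun s => (s / ν s) ^ (q' / p)) (Set.Ioc 0 T)) :
    Tendsto (fun s => ENNReal.ofReal (s ^ (1 / p)) *
        ⨆ r ∈ Set.Icc s T, ENNReal.ofReal (ν r ^ (-(1 / p)) * r ^ (1 / q')))
      (nhdsWithin 0 (Set.Ioi 0)) (nhds 0) := by
  have hppos : (0:ℝ) < p := lt_trans one_pos hp
  have hq'pos : 0 < q' := by rw [hq']; exact div_pos (by linarith) (by linarith)
  set a := q' / p with ha_def
  have ha : 0 < a := div_pos hq'pos hppos
  -- continuity of primitive
  have hIcc : IntegrableOn (fun s => (s / ν s) ^ a) (Icc 0 T) := by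
    rwa [integrableOn_Icc_iff_integrableOn_Ioc]
  have hcont := intervalIntegral.continuousOn_primitive (a := 0) (b := T) (μ := volume) hIcc
  have hI : Tendsto (fun r => ∫ ρ in Ioc 0 r, (ρ / ν ρ) ^ a) (nhdsWithin 0 (Set.Ioi 0))
      (nhds 0) := by
    have h0 : (∫ ρ in Ioc (0:ℝ) 0, (ρ / ν ρ) ^ a) = 0 := by simp
    have := (hcont 0 ⟨le_refl 0, hT.le⟩)
    rw [ContinuousWithinAt, h0] at this
    refine this.mono_left ?_
    rw [← nhdsWithin_Ioo_eq_nhdsGT hT]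
    exact nhdsWithin_mono _ Ioo_subset_Icc_self
  -- Lemma A
  have lemA : ∀ r ∈ Ioc (0:ℝ) T,
      ν r ^ (-a) * r ^ (a + 1) ≤ (a + 1) * ∫ ρ in Ioc 0 r, (ρ / ν ρ) ^ a := by
    intro r hr
    have hνr := hνpos r hr
    have h1 : ∀ ρ ∈ Ioc (0:ℝ) r, ρ ^ a * ν r ^ (-a) ≤ (ρ / ν ρ) ^ a := by
      intro ρ hρ
      have hρT : ρ ∈ Ioc (0:ℝ) T := ⟨hρ.1, hρ.2.trans hr.2⟩
      have hνρ := hνpos ρ hρT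
      have hle : ν ρ ≤ ν r := hν hρT hr hρ.2
      have : (ρ / ν r) ^ a ≤ (ρ / ν ρ) ^ a := by
        apply Real.rpow_le_rpow (div_nonneg hρ.1.le hνr.le) _ ha.le
        exact div_le_div_of_nonneg_left hρ.1.le hνρ hle
      calc ρ ^ a * ν r ^ (-a) = (ρ / ν r) ^ a := by
            rw [Real.div_rpow hρ.1.le hνr.le, Real.rpow_neg hνr.le, div_eq_mul_inv]
        _ ≤ _ := this
    have int1 : IntegrableOn (fun ρ => ρ ^ a * ν r ^ (-a)) (Ioc 0 r) := by
      have : IntegrableOn (fun ρ : ℝ => ρ ^ a) (Ioc 0 r) := by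
        rw [← intervalIntegrable_iff_integrableOn_Ioc_of_le hr.1.le]
        exact intervalIntegral.intervalIntegrable_rpow' (by linarith)
      exact this.mul_const _
    have int2 : IntegrableOn (fun ρ => (ρ / ν ρ) ^ a) (Ioc 0 r) :=
      hint.mono_set (Ioc_subset_Ioc_right hr.2)
    have hmono := setIntegral_mono_on int1 int2 measurableSet_Ioc h1
    have hcomp : (∫ ρ in Ioc (0:ℝ) r, ρ ^ a * ν r ^ (-a))
        = r ^ (a + 1) / (a + 1) * ν r ^ (-a) := by
      rw [integral_mul_const, ← intervalIntegral.integral_of_le hr.1.le,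
        integral_rpow (Or.inl (by linarith))]
      rw [Real.zero_rpow (by positivity)]
      ring_nf
    rw [hcomp] at hmono
    have hap : (0:ℝ) < a + 1 := by linarith
    calc ν r ^ (-a) * r ^ (a + 1) = (a+1) * (r ^ (a + 1) / (a + 1) * ν r ^ (-a)) := by
          field_simp
      _ ≤ _ := by exact mul_le_mul_of_nonneg_left hmono hap.le
  rw [ENNReal.tendsto_nhds_zero]
  intro ε hε
  obtain ⟨e, he, heε⟩ : ∃ e : ℝ, 0 < e ∧ ENNReal.ofReal e ≤ ε := by
    rcases eq_or_ne ε ⊤ with h | h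
    · exact ⟨1, one_pos, by simp [h]⟩
    · exact ⟨ε.toReal, ENNReal.toReal_pos hε.ne' h, by rw [ENNReal.ofReal_toReal h]⟩
  have hc : (0:ℝ) < e ^ q' / (a + 1) := by positivity
  have hev : ∀ᶠ r in nhdsWithin 0 (Set.Ioi 0),
      (∫ ρ in Ioc 0 r, (ρ / ν ρ) ^ a) < e ^ q' / (a + 1) := hI.eventually_lt_const hc
  obtain ⟨δ₀, hδ₀, hδ₀sub⟩ := mem_nhdsGT_iff_exists_Ioo_subset.mp hev
  rw [Set.mem_Ioi] at hδ₀
  set δ₁ : ℝ := min (δ₀ / 2) T with hδ₁def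
  have hδ₁pos : 0 < δ₁ := lt_min (by linarith) hT
  have hδ₁T : δ₁ ∈ Ioc (0:ℝ) T := ⟨hδ₁pos, min_le_right _ _⟩
  have hδ₁δ₀ : δ₁ < δ₀ := lt_of_le_of_lt (min_le_left _ _) (by linarith)
  have hνδ := hνpos δ₁ hδ₁T
  set C : ℝ := ν δ₁ ^ (-(1 / p)) * T ^ (1 / q') with hCdef
  have hC : 0 < C := mul_pos (Real.rpow_pos_of_pos hνδ _) (Real.rpow_pos_of_pos hT _)
  set δ : ℝ := min δ₁ ((e / C) ^ p) with hδdef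
  have hδpos : 0 < δ := lt_min hδ₁pos (Real.rpow_pos_of_pos (div_pos he hC) _)
  filter_upwards [Ioo_mem_nhdsGT_of_mem (Set.left_mem_Ico.mpr hδpos)] with s hs
  obtain ⟨hs0, hsδ⟩ := hs
  have hsδ₁ : s < δ₁ := lt_of_lt_of_le hsδ (min_le_left _ _)
  have hsT : s < T := lt_of_lt_of_le hsδ₁ hδ₁T.2
  have hsp : (0:ℝ) < s ^ (1 / p) := Real.rpow_pos_of_pos hs0 _
  set B := max (e / s ^ (1 / p)) C with hB
  have hsup : (⨆ r ∈ Set.Icc s T, ENNReal.ofReal (ν r ^ (-(1 / p)) * r ^ (1 / q')))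
      ≤ ENNReal.ofReal B := by
    refine iSup₂_le fun r hr => ENNReal.ofReal_le_ofReal ?_
    have hrT : r ∈ Ioc (0:ℝ) T := ⟨lt_of_lt_of_le hs0 hr.1, hr.2⟩
    have hνr := hνpos r hrT
    rcases lt_or_ge r δ₁ with h | h
    · refine le_max_of_le_left ?_
      have hrδ₀ : r < δ₀ := lt_trans h hδ₁δ₀
      have hIr : (∫ ρ in Ioc 0 r, (ρ / ν ρ) ^ a) < e ^ q' / (a + 1) :=
        hδ₀sub ⟨hrT.1, hrδ₀⟩
      have hkey : ν r ^ (-a) * r ^ (a + 1) < e ^ q' := by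
        calc ν r ^ (-a) * r ^ (a + 1)
            ≤ (a + 1) * ∫ ρ in Ioc 0 r, (ρ / ν ρ) ^ a := lemA r hrT
          _ < (a + 1) * (e ^ q' / (a + 1)) :=
              mul_lt_mul_of_pos_left hIr (by linarith)
          _ = e ^ q' := by field_simp
      have hy : (ν r ^ (-(1 / p)) * r ^ (1 / q') * r ^ (1 / p)) ^ q'
          = ν r ^ (-a) * r ^ (a + 1) := by
        rw [Real.mul_rpow (mul_nonneg (Real.rpow_nonneg hνr.le _)
              (Real.rpow_nonneg hrT.1.le _)) (Real.rpow_nonneg hrT.1.le _),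
            Real.mul_rpow (Real.rpow_nonneg hνr.le _) (Real.rpow_nonneg hrT.1.le _),
            ← Real.rpow_mul hνr.le, ← Real.rpow_mul hrT.1.le, ← Real.rpow_mul hrT.1.le,
            one_div_mul_cancel hq'pos.ne', Real.rpow_one]
        have e1 : -(1 / p) * q' = -a := by rw [ha_def]; ring
        have e2 : 1 / p * q' = a := by rw [ha_def]; ring
        rw [e1, e2, Real.rpow_add hrT.1, Real.rpow_one]
        ring
      have hyl : ν r ^ (-(1 / p)) * r ^ (1 / q') * r ^ (1 / p) < e := by
        by_contra hcon
        push_neg at hcon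
        have h2 := Real.rpow_le_rpow he.le hcon hq'pos.le
        rw [hy] at h2
        linarith
      rw [le_div_iff₀ hsp]
      have hsr : s ^ (1 / p) ≤ r ^ (1 / p) :=
        Real.rpow_le_rpow hs0.le hr.1 (by positivity)
      calc ν r ^ (-(1 / p)) * r ^ (1 / q') * s ^ (1 / p)
          ≤ ν r ^ (-(1 / p)) * r ^ (1 / q') * r ^ (1 / p) :=
            mul_le_mul_of_nonneg_left hsr
              (mul_nonneg (Real.rpow_nonneg hνr.le _) (Real.rpow_nonneg hrT.1.le _))
        _ ≤ e := hyl.le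
    · refine le_max_of_le_right ?_
      have hle : ν δ₁ ≤ ν r := hν hδ₁T hrT h
      rw [hCdef]
      apply mul_le_mul _ (Real.rpow_le_rpow hrT.1.le hrT.2 (by positivity))
        (Real.rpow_nonneg hrT.1.le _) (Real.rpow_nonneg hνδ.le _)
      rw [Real.rpow_neg hνr.le, Real.rpow_neg hνδ.le]
      exact inv_anti₀ (Real.rpow_pos_of_pos hνδ _)
        (Real.rpow_le_rpow hνδ.le hle (by positivity))
  calc ENNReal.ofReal (s ^ (1 / p)) *
        ⨆ r ∈ Set.Icc s T, ENNReal.ofReal (ν r ^ (-(1 / p)) * r ^ (1 / q'))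
      ≤ ENNReal.ofReal (s ^ (1 / p)) * ENNReal.ofReal B := mul_le_mul_right hsup _
    _ = ENNReal.ofReal (s ^ (1 / p) * B) := (ENNReal.ofReal_mul hsp.le).symm
    _ ≤ ENNReal.ofReal e := by
        apply ENNReal.ofReal_le_ofReal
        rw [hB, mul_max_of_nonneg _ _ hsp.le]
        apply max_le
        · rw [mul_div_cancel₀ e hsp.ne']
        · have hsle : s ≤ (e / C) ^ p := le_of_lt (lt_of_lt_of_le hsδ (min_le_right _ _))
          have : s ^ (1 / p) ≤ ((e / C) ^ p) ^ (1 / p) :=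
            Real.rpow_le_rpow hs0.le hsle (by positivity)
          rw [← Real.rpow_mul (div_nonneg he.le hC.le), mul_one_div_cancel hppos.ne',
            Real.rpow_one] at this
          calc s ^ (1 / p) * C ≤ (e / C) * C :=
                mul_le_mul_of_nonneg_right this hC.le
            _ = e := div_mul_cancel₀ e hC.ne'
    _ ≤ ε := heε
end

section
/- Let u and v be nonnegative measurable functions on a finite-measure set Ω such that u and v are equidistributed (have the same distribution function), and let I : [0, |Ω|] → [0, ∞) be nondecreasing. Then the increasing rearrangement of the composition I ∘ μ_u ∘ u satisfies (I ∘ μ_u ∘ u)_*(r) ≥ I(r) for r ∈ (0, |Ω|), where μ_u is the distribution function of u. -/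
/-!
Where `μ_u(u x) ≥ r`, monotonicity of `I` gives `I(μ_u(u x)) ≥ I(r)`. The remaining set
`{x | μ_u(u x) < r}` is the preimage under `u` of an upper set of levels, hence an increasing
union of superlevel sets `{u ≥ s}` of measure `< r`, so its measure is at most `r` by continuity
from below. Thus `I ∘ μ_u ∘ u ≥ I(r)` on a set of measure at least `|Ω| - r`, which is
exactly `(I ∘ μ_u ∘ u)*(|Ω| - r) ≥ I(r)`.
-/

open MeasureTheory ENNReal

/-- The decreasing rearrangement of a measurable function `u` with respect to a
measure `μ`: `u*(s) = sup { t ≥ 0 : μ({|u| ≥ t}) ≥ s }`. -/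
noncomputable def decRearr {α : Type*} [MeasurableSpace α] (μ : Measure α)
    (u : α → ℝ) (s : ℝ) : ℝ≥0∞ :=
  sSup {t : ℝ≥0∞ | ENNReal.ofReal s ≤ μ {x | t ≤ ENNReal.ofReal |u x|}}

open Set

section Superlevel

variable {α β : Type*} [MeasurableSpace α] [LinearOrder β] [TopologicalSpace β]
  [OrderTopology β] [SecondCountableTopology β] (μ : Measure α) (u : α → β)

theorem measure_preimage_le_of_isUpperSet {S : Set β} (hS : IsUpperSet S) {c : ℝ≥0∞}
    (h : ∀ s ∈ S, μ (u ⁻¹' Ici s) ≤ c) : μ (u ⁻¹' S) ≤ c := by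
  -- makes `S` carry the order topology, so that `atBot` on `S` is countably generated
  have : S.OrdConnected := hS.ordConnected
  have hunion : u ⁻¹' S = ⋃ s : S, u ⁻¹' Ici (s : β) := by
    ext x
    simp only [mem_preimage, mem_iUnion, mem_Ici, Subtype.exists, exists_prop]
    exact ⟨fun hx => ⟨u x, hx, le_rfl⟩, fun ⟨s, hs, hsx⟩ => hS hsx hs⟩
  have hanti : Antitone fun s : S => u ⁻¹' Ici (s : β) :=
    fun _ _ hst => preimage_mono (Ici_subset_Ici.2 hst)
  rw [hunion, hanti.measure_iUnion]
  exact iSup_le fun s => h s s.2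

theorem measure_setOf_measure_superlevel_lt_le (c : ℝ≥0∞) :
    μ {x | μ {y | u x ≤ u y} < c} ≤ c :=
  measure_preimage_le_of_isUpperSet μ u (S := {t | μ (u ⁻¹' Ici t) < c})
    (fun _ _ hst hs => (measure_mono (preimage_mono (Ici_subset_Ici.2 hst))).trans_lt hs)
    fun _ hs => hs.le

end Superlevel

theorem increasing_rearrangement_composition_general {α : Type*} [MeasurableSpace α]
    (μ : Measure α) (u : α → ℝ)
    (I : ℝ → ℝ) (hI : MonotoneOn I (Set.Icc 0 (μ Set.univ).toReal)) :
    ∀ r ∈ Set.Ioo (0 : ℝ) (μ Set.univ).toReal,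
      ENNReal.ofReal (I r) ≤
        decRearr μ (fun x => I ((μ {y | u x ≤ u y}).toReal))
          ((μ Set.univ).toReal - r) := by
  rintro r ⟨hr0, hrT⟩
  have hfin : μ univ ≠ ∞ := (toReal_pos_iff.1 (hr0.trans hrT)).2.ne
  set B := {x | μ {y | u x ≤ u y} < ENNReal.ofReal r}
  have hgood : univ \ B ⊆ {x | ENNReal.ofReal (I r) ≤
      ENNReal.ofReal |I ((μ {y | u x ≤ u y}).toReal)|} := by
    rintro x ⟨-, hx⟩
    have hrm : r ≤ (μ {y | u x ≤ u y}).toReal :=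
      (ENNReal.ofReal_le_iff_le_toReal (measure_ne_top_of_subset (subset_univ _) hfin)).1
        (not_lt.1 hx)
    have hmT : (μ {y | u x ≤ u y}).toReal ≤ (μ univ).toReal :=
      toReal_mono hfin (measure_mono (subset_univ _))
    exact ENNReal.ofReal_le_ofReal
      ((hI ⟨hr0.le, hrT.le⟩ ⟨hr0.le.trans hrm, hmT⟩ hrm).trans (le_abs_self _))
  refine le_sSup ?_
  calc ENNReal.ofReal ((μ univ).toReal - r) = μ univ - ENNReal.ofReal r := by
        rw [ENNReal.ofReal_sub _ hr0.le, ofReal_toReal hfin]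
    _ ≤ μ univ - μ B := tsub_le_tsub_left (measure_setOf_measure_superlevel_lt_le μ u _) _
    _ ≤ μ (univ \ B) := le_measure_sdiff
    _ ≤ _ := measure_mono hgood

/-- If `u` and `v` are equidistributed nonnegative measurable functions and `I`
is nondecreasing, then the increasing rearrangement of `I ∘ μ_u ∘ u` satisfies
`(I ∘ μ_u ∘ u)_*(r) ≥ I(r)`, where the increasing rearrangement of `w` is
`w_*(r) = w*(|Ω| − r)`. -/
theorem increasing_rearrangement_composition {α : Type*} [MeasurableSpace α]
    (μ : Measure α) [IsFiniteMeasure μ] (u v : α → ℝ)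
    (hu : Measurable u) (hv : Measurable v)
    (hunn : ∀ x, 0 ≤ u x) (hvnn : ∀ x, 0 ≤ v x)
    (hequi : ∀ t : ℝ, μ {x | t ≤ u x} = μ {x | t ≤ v x})
    (I : ℝ → ℝ) (hI : MonotoneOn I (Set.Icc 0 (μ Set.univ).toReal))
    (hInn : ∀ r, 0 ≤ I r) :
    ∀ r ∈ Set.Ioo (0 : ℝ) (μ Set.univ).toReal,
      ENNReal.ofReal (I r) ≤
        decRearr μ (fun x => I ((μ {y | u x ≤ u y}).toReal))
          ((μ Set.univ).toReal - r) :=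
  increasing_rearrangement_composition_general μ u I hI
end
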